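/- arXiv:1802.06048 — 3 statements merged into one kernel-verified Lean document; each statement's English description precedes it below -/
import Mathlib

section
/- Let A be a p × p real matrix of rank r (with r ≤ p). Then the number of indices j ∈ {1,...,p} such that the j-th column of A is dominated by its diagonal entry in the ℓ2 sense, i.e., A_{jj}² > Σ_{i ≠ j} A_{ij}², is at most 2r − 1. -/
/-!
Rescaling each dominated column `j` by `(A j j)⁻¹` and zeroing the other columns gives a matrix
`C` with `rank C ≤ r`, `tr C = s` (the number of dominated columns) and `‖C‖_F² < 2s`.
For every real square matrix `tr(C)² ≤ rank C · ‖C‖_F²`: if `P` is the orthogonal projection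
onto the column space, then `tr C = tr(P C)`, which Cauchy–Schwarz bounds by `‖P‖_F ‖C‖_F`, and
`‖P‖_F² = tr(P Pᵀ) = tr P = rank C`. Hence `s² < 2 r s`, i.e. `s ≤ 2r - 1`.
-/

open Finset

namespace Matrix

variable {m n : Type*} [Fintype m] [Fintype n]

theorem sq_trace_mul_le_sum_sq_mul_sum_sq (A : Matrix m n ℝ) (B : Matrix n m ℝ) :
    (A * B).trace ^ 2 ≤ (∑ i, ∑ j, A i j ^ 2) * ∑ i, ∑ j, B i j ^ 2 := by
  have h := sum_mul_sq_le_sq_mul_sq univ (fun x : m × n => A x.1 x.2) (fun x => B x.2 x.1)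
  simp only [Fintype.sum_prod_type] at h
  rwa [sum_comm (f := fun i j => B j i ^ 2)] at h

theorem sum_sq_eq_trace_of_isStarProjection {P : Matrix n n ℝ} (hP : IsStarProjection P) :
    ∑ i, ∑ j, P i j ^ 2 = P.trace := by
  have hsymm : Pᵀ = P := by
    rw [← conjTranspose_eq_transpose_of_trivial]
    exact hP.isSelfAdjoint
  calc ∑ i, ∑ j, P i j ^ 2 = (P * Pᵀ).trace := by
        simp only [trace, diag, mul_apply, transpose_apply, sq]
    _ = P.trace := by rw [hsymm, hP.isIdempotentElem.eq]

variable [DecidableEq n]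

theorem exists_isStarProjection_trace_eq_rank_mul_eq_self {𝕜 : Type*} [RCLike 𝕜]
    (M : Matrix n n 𝕜) :
    ∃ P : Matrix n n 𝕜, IsStarProjection P ∧ P.trace = M.rank ∧ P * M = M := by
  let e := (toEuclideanCLM (n := n) (𝕜 := 𝕜)).symm
  let b := (EuclideanSpace.basisFun n 𝕜).toBasis
  let K := LinearMap.range (toLin b b M)
  refine ⟨e K.starProjection, ⟨K.isIdempotentElem_starProjection.map e, ?_⟩, ?_, ?_⟩
  · exact (e.map_star' _).symm.trans (congrArg e (isSelfAdjoint_starProjection K).star_eq)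
  · have hP : toLin b b (e K.starProjection) = K.starProjection :=
      congrArg ContinuousLinearMap.toLinearMap (e.symm_apply_apply _)
    have hproj := LinearMap.IsIdempotentElem.isProj_range _
      (ContinuousLinearMap.IsIdempotentElem.toLinearMap K.isIdempotentElem_starProjection)
    rw [← trace_toLin_eq _ b, rank_eq_finrank_range_toLin M b b, hP, hproj.trace]
    exact congrArg (fun L : Submodule 𝕜 _ => (Module.finrank 𝕜 L : 𝕜)) K.range_starProjection
  · have hfix : K.starProjection * e.symm M = e.symm M := by
      ext1 v
      exact K.starProjection_eq_self_iff.mpr (LinearMap.mem_range_self (toLin b b M) v)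
    calc e K.starProjection * M = e (K.starProjection * e.symm M) := by
          rw [map_mul, e.apply_symm_apply]
      _ = M := by rw [hfix, e.apply_symm_apply]

theorem sq_trace_le_rank_mul_sum_sq (M : Matrix n n ℝ) :
    M.trace ^ 2 ≤ M.rank * ∑ i, ∑ j, M i j ^ 2 := by
  obtain ⟨P, hP, htrace, hPM⟩ := exists_isStarProjection_trace_eq_rank_mul_eq_self M
  calc M.trace ^ 2 = (P * M).trace ^ 2 := by rw [hPM]
    _ ≤ (∑ i, ∑ j, P i j ^ 2) * ∑ i, ∑ j, M i j ^ 2 := sq_trace_mul_le_sum_sq_mul_sum_sq P M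
    _ = M.rank * ∑ i, ∑ j, M i j ^ 2 := by rw [sum_sq_eq_trace_of_isStarProjection hP, htrace]

theorem card_lt_two_mul_rank_of_sum_sq_lt (A : Matrix n n ℝ) {S : Finset n} (hS : S.Nonempty)
    (hcol : ∀ j ∈ S, ∑ i, A i j ^ 2 < 2 * A j j ^ 2) : #S < 2 * A.rank := by
  have hdiag : ∀ j ∈ S, A j j ^ 2 ≠ 0 := fun j hj h0 => by
    have := hcol j hj
    rw [h0, mul_zero] at this
    exact this.not_ge (sum_nonneg fun i _ => sq_nonneg _)
  let C := A * diagonal fun j => if j ∈ S then (A j j)⁻¹ else 0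
  have hC : ∀ i j, C i j = if j ∈ S then A i j / A j j else 0 := fun i j => by
    simp only [C, mul_diagonal]
    split_ifs <;> simp [div_eq_mul_inv]
  have htrace : C.trace = #S := by
    simp only [trace, diag, hC, sum_ite_mem, univ_inter]
    rw [sum_congr rfl fun j hj => div_self (pow_ne_zero_iff two_ne_zero |>.mp (hdiag j hj))]
    simp
  have hfrob : ∑ i, ∑ j, C i j ^ 2 < 2 * #S := by
    calc ∑ i, ∑ j, C i j ^ 2 = ∑ j ∈ S, (∑ i, A i j ^ 2) / A j j ^ 2 := by
          rw [sum_comm]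
          simp only [hC, ite_pow, sum_ite_irrel, div_pow, ← sum_div]
          simp [sum_ite_mem]
      _ < ∑ j ∈ S, 2 := sum_lt_sum_of_nonempty hS fun j hj =>
          (div_lt_iff₀ ((sq_nonneg _).lt_of_ne' (hdiag j hj))).mpr (hcol j hj)
      _ = 2 * #S := by rw [sum_const, nsmul_eq_mul, mul_comm]
  have hrank : (C.rank : ℝ) ≤ A.rank := by exact_mod_cast rank_mul_le_left _ _
  have hkey := sq_trace_le_rank_mul_sum_sq C
  rw [htrace] at hkey
  have hSpos : (0 : ℝ) < #S := by exact_mod_cast hS.card_pos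
  have hfrob_nonneg : 0 ≤ ∑ i, ∑ j, C i j ^ 2 := by positivity
  have : (#S : ℝ) < 2 * A.rank := by
    nlinarith [mul_le_mul_of_nonneg_right hrank hfrob_nonneg]
  exact_mod_cast this

end Matrix

theorem diag_dominant_columns_le_general {p r : ℕ} (A : Matrix (Fin p) (Fin p) ℝ)
    (hr : A.rank = r) :
    (Finset.univ.filter fun j : Fin p =>
        (∑ i ∈ Finset.univ.erase j, (A i j) ^ 2) < (A j j) ^ 2).card ≤ 2 * r - 1 := by
  set S := univ.filter fun j : Fin p => (∑ i ∈ univ.erase j, (A i j) ^ 2) < (A j j) ^ 2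
  rcases S.eq_empty_or_nonempty with hS | hS
  · simp [hS]
  have hcol : ∀ j ∈ S, ∑ i, A i j ^ 2 < 2 * A j j ^ 2 := fun j hj => by
    rw [← sum_erase_add _ _ (mem_univ j)]
    linarith [(mem_filter.mp hj).2]
  have := A.card_lt_two_mul_rank_of_sum_sq_lt hS hcol
  omega

/-- Lemma 3: A p×p real matrix of rank r has at most 2r−1 columns that are
dominated by their diagonal entry in the ℓ2 sense. -/
theorem diag_dominant_columns_le {p r : ℕ} (A : Matrix (Fin p) (Fin p) ℝ)
    (hr : A.rank = r) (hr1 : 1 ≤ r) :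
    (Finset.univ.filter fun j : Fin p =>
        (∑ i ∈ Finset.univ.erase j, (A i j) ^ 2) < (A j j) ^ 2).card ≤ 2 * r - 1 :=
  diag_dominant_columns_le_general A hr
end

section
/- If a p × p real symmetric matrix M can be written as M = L + D with L symmetric of rank at most r and D diagonal, then M can also be written as M = L' + D' with L' symmetric of rank at most 3r, D' diagonal, and ‖M‖_F² ≥ (1/8)(‖L'‖_F² + ‖D'‖_F²). -/
/-!
Let `wᵢ = ‖P eᵢ‖²` be the leverage scores of `L`, where `P` is the orthogonal projection onto
the column space of `L`. Then `∑ wᵢ = tr P = rank L`, and Cauchy–Schwarz applied to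
`Lᵢᵢ = ⟪P eᵢ, L eᵢ⟫` gives `Lᵢᵢ² ≤ wᵢ ‖L eᵢ‖²`. The at most `2 rank L` diagonal entries of `D`
with `wᵢ ≥ 1/2` are moved into `L'`, the others are kept in `D'`. In a column with `wᵢ < 1/2`
the bound forces `Lᵢᵢ²` below the off-diagonal mass of the column, which `L` shares with `M`,
so both `Lᵢᵢ` and `Dᵢᵢ = Mᵢᵢ - Lᵢᵢ` are controlled by the column of `M`.
-/

open Matrix Finset
open scoped InnerProductSpace

section
variable {E ι : Type*} [NormedAddCommGroup E] [InnerProductSpace ℝ E]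

theorem Submodule.sum_norm_starProjection_sq [Fintype ι] [FiniteDimensional ℝ E]
    (K : Submodule ℝ E) (b : OrthonormalBasis ι ℝ E) :
    ∑ i, ‖K.starProjection (b i)‖ ^ 2 = Module.finrank ℝ K := by
  have hP : LinearMap.IsProj K (K.starProjection : E →ₗ[ℝ] E) :=
    ⟨K.starProjection_apply_mem, fun _ hx => K.starProjection_eq_self_iff.mpr hx⟩
  rw [← hP.trace, LinearMap.trace_eq_sum_inner _ b]
  refine sum_congr rfl fun i _ => ?_
  rw [ContinuousLinearMap.coe_coe, real_inner_comm]
  simpa using (K.re_inner_starProjection_eq_normSq (b i)).symm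

theorem Submodule.inner_sq_le_norm_starProjection_sq_mul (K : Submodule ℝ E)
    [K.HasOrthogonalProjection] (x : E) {y : E} (hy : y ∈ K) :
    ⟪x, y⟫_ℝ ^ 2 ≤ ‖K.starProjection x‖ ^ 2 * ‖y‖ ^ 2 := by
  have hproj : ⟪x, y⟫_ℝ = ⟪K.starProjection x, y⟫_ℝ := by
    rw [K.inner_starProjection_left_eq_right, K.starProjection_eq_self_iff.mpr hy]
  rw [hproj, ← mul_pow, sq_le_sq, abs_mul, abs_norm, abs_norm]
  exact abs_real_inner_le_norm _ _

end

theorem sq_le_of_sq_le_mul_sq_add {a s w : ℝ} (hs : 0 ≤ s) (hw : w < 1 / 2)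
    (h : a ^ 2 ≤ w * (a ^ 2 + s)) : a ^ 2 ≤ s := by
  nlinarith [mul_nonneg (by linarith : (0 : ℝ) ≤ 1 - 2 * w) hs]

namespace Matrix

section LeverageScore

variable {m n : Type*} [Fintype m] [Fintype n] [DecidableEq m] [DecidableEq n]

noncomputable def leverageScore (A : Matrix m n ℝ) (i : m) : ℝ :=
  ‖(LinearMap.range A.toEuclideanLin).starProjection (EuclideanSpace.single i 1)‖ ^ 2

theorem leverageScore_nonneg (A : Matrix m n ℝ) (i : m) : 0 ≤ A.leverageScore i := by
  unfold leverageScore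
  positivity

theorem sum_leverageScore (A : Matrix m n ℝ) : ∑ i, A.leverageScore i = A.rank := by
  rw [A.rank_eq_finrank_range_toLin (EuclideanSpace.basisFun m ℝ).toBasis
      (EuclideanSpace.basisFun n ℝ).toBasis,
    ← toEuclideanLin_eq_toLin_orthonormal,
    ← Submodule.sum_norm_starProjection_sq _ (EuclideanSpace.basisFun m ℝ)]
  simp [leverageScore]

theorem sq_apply_le_leverageScore_mul (A : Matrix m n ℝ) (i : m) (j : n) :
    A i j ^ 2 ≤ A.leverageScore i * ∑ k, A k j ^ 2 := by
  have hentry :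
      ⟪EuclideanSpace.single i 1, A.toEuclideanLin (EuclideanSpace.single j 1)⟫_ℝ = A i j := by
    simp [EuclideanSpace.inner_single_left]
  have hnorm : ‖A.toEuclideanLin (EuclideanSpace.single j 1)‖ ^ 2 = ∑ k, A k j ^ 2 := by
    simp [EuclideanSpace.real_norm_sq_eq]
  have h := (LinearMap.range A.toEuclideanLin).inner_sq_le_norm_starProjection_sq_mul
    (EuclideanSpace.single i 1) (LinearMap.mem_range_self _ (EuclideanSpace.single j 1))
  rwa [hentry, hnorm] at h

theorem card_half_le_leverageScore_le (A : Matrix m n ℝ) :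
    #{i | 1 / 2 ≤ A.leverageScore i} ≤ 2 * A.rank := by
  have hmarkov : #{i | 1 / 2 ≤ A.leverageScore i} • (1 / 2 : ℝ) ≤ ∑ i, A.leverageScore i :=
    (card_nsmul_le_sum _ _ _ fun i hi => (mem_filter.mp hi).2).trans
      (sum_le_sum_of_subset_of_nonneg (filter_subset _ _) fun i _ _ => A.leverageScore_nonneg i)
  rw [sum_leverageScore, nsmul_eq_mul] at hmarkov
  exact_mod_cast (by linarith : (#{i | 1 / 2 ≤ A.leverageScore i} : ℝ) ≤ 2 * A.rank)

end LeverageScore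

theorem rank_add_le {m n K : Type*} [Fintype n] [Field K] (A B : Matrix m n K) :
    (A + B).rank ≤ A.rank + B.rank := by
  have hrange : LinearMap.range (A + B).mulVecLin ≤
      LinearMap.range A.mulVecLin ⊔ LinearMap.range B.mulVecLin := by
    rw [mulVecLin_add]
    exact LinearMap.range_add_le _ _
  exact (Submodule.finrank_mono hrange).trans (Submodule.finrank_add_le_finrank_add_finrank _ _)

variable {n : Type*} [Fintype n] [DecidableEq n]

theorem sum_sq_col_add_diagonal (A : Matrix n n ℝ) (d : n → ℝ) (j : n) :
    ∑ i, (A + diagonal d) i j ^ 2 = (A j j + d j) ^ 2 + ∑ i ∈ univ.erase j, A i j ^ 2 := by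
  rw [← add_sum_erase _ _ (mem_univ j)]
  congr 1
  · simp
  · exact sum_congr rfl fun i hi => by simp [diagonal_apply_ne _ (ne_of_mem_erase hi)]

noncomputable def highLeverageDiag (L D : Matrix n n ℝ) : Matrix n n ℝ :=
  diagonal fun i => if 1 / 2 ≤ L.leverageScore i then D i i else 0

noncomputable def lowLeverageDiag (L D : Matrix n n ℝ) : Matrix n n ℝ :=
  diagonal fun i => if 1 / 2 ≤ L.leverageScore i then 0 else D i i

variable {L D : Matrix n n ℝ}

theorem highLeverageDiag_add_lowLeverageDiag (hD : D.IsDiag) :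
    highLeverageDiag L D + lowLeverageDiag L D = D := by
  rw [highLeverageDiag, lowLeverageDiag, diagonal_add, ← hD.diagonal_diag]
  congr 1
  ext i
  split_ifs <;> simp

theorem rank_highLeverageDiag_le : (highLeverageDiag L D).rank ≤ 2 * L.rank := by
  rw [highLeverageDiag, rank_diagonal, Fintype.card_subtype]
  refine (card_le_card fun i hi => ?_).trans L.card_half_le_leverageScore_le
  simp only [mem_filter, mem_univ, true_and, ne_eq, ite_eq_right_iff, not_forall] at hi ⊢
  exact hi.1

theorem sum_sq_col_highLeverageDiag_add_lowLeverageDiag_le (hD : D.IsDiag) (j : n) :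
    ∑ i, (L + highLeverageDiag L D) i j ^ 2 + ∑ i, lowLeverageDiag L D i j ^ 2 ≤
      8 * ∑ i, (L + D) i j ^ 2 := by
  set off := ∑ i ∈ univ.erase j, L i j ^ 2
  have hoff : 0 ≤ off := sum_nonneg fun i _ => sq_nonneg _
  have hlev : L j j ^ 2 ≤ L.leverageScore j * (L j j ^ 2 + off) := by
    rw [add_sum_erase _ (fun i => L i j ^ 2) (mem_univ j)]
    exact L.sq_apply_le_leverageScore_mul j j
  have hM : ∑ i, (L + D) i j ^ 2 = (L j j + D j j) ^ 2 + off := by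
    conv_lhs => rw [← hD.diagonal_diag]
    exact sum_sq_col_add_diagonal L _ j
  have hlow : ∑ i, lowLeverageDiag L D i j ^ 2 =
      (if 1 / 2 ≤ L.leverageScore j then 0 else D j j) ^ 2 := by
    simp [lowLeverageDiag, diagonal_apply]
  rw [highLeverageDiag, sum_sq_col_add_diagonal, hlow, hM]
  split_ifs with hhigh
  · nlinarith [sq_nonneg (L j j + D j j)]
  · have hdom := sq_le_of_sq_le_mul_sq_add hoff (not_le.mp hhigh) hlev
    nlinarith [sq_nonneg (L j j + D j j), sq_nonneg (L j j + 2 * D j j)]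

end Matrix

theorem low_rank_plus_diag_rewrite_general {p r : ℕ} (M L D : Matrix (Fin p) (Fin p) ℝ)
    (hL : Lᵀ = L) (hLr : L.rank ≤ r) (hD : D.IsDiag) (hMLD : M = L + D) :
    ∃ L' D' : Matrix (Fin p) (Fin p) ℝ,
      L'ᵀ = L' ∧ L'.rank ≤ 3 * r ∧ D'.IsDiag ∧ M = L' + D' ∧
      (1 / 8) * ((∑ i, ∑ j, (L' i j) ^ 2) + (∑ i, ∑ j, (D' i j) ^ 2))
        ≤ ∑ i, ∑ j, (M i j) ^ 2 := by
  refine ⟨L + highLeverageDiag L D, lowLeverageDiag L D, ?_, ?_, isDiag_diagonal _, ?_, ?_⟩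
  · rw [transpose_add, hL, highLeverageDiag, diagonal_transpose]
  · have := (rank_add_le L (highLeverageDiag L D)).trans
      (add_le_add hLr (rank_highLeverageDiag_le.trans (Nat.mul_le_mul_left 2 hLr)))
    omega
  · rw [add_assoc, highLeverageDiag_add_lowLeverageDiag hD, hMLD]
  · have hcols := sum_le_sum fun j (_ : j ∈ univ) =>
      sum_sq_col_highLeverageDiag_add_lowLeverageDiag_le (L := L) hD j
    rw [sum_add_distrib, ← mul_sum] at hcols
    rw [hMLD, sum_comm, sum_comm (f := fun i j => lowLeverageDiag L D i j ^ 2),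
      sum_comm (f := fun i j => (L + D) i j ^ 2)]
    linarith

/-- Lemma 2: a symmetric matrix M = L + D (L symmetric of rank ≤ r, D diagonal)
can be rewritten as M = L' + D' with rank L' ≤ 3r, D' diagonal, and
‖M‖_F² ≥ (1/8)(‖L'‖_F² + ‖D'‖_F²). -/
theorem low_rank_plus_diag_rewrite {p r : ℕ} (M L D : Matrix (Fin p) (Fin p) ℝ)
    (hM : Mᵀ = M) (hL : Lᵀ = L) (hLr : L.rank ≤ r) (hD : D.IsDiag) (hMLD : M = L + D) :
    ∃ L' D' : Matrix (Fin p) (Fin p) ℝ,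
      L'ᵀ = L' ∧ L'.rank ≤ 3 * r ∧ D'.IsDiag ∧ M = L' + D' ∧
      (1 / 8) * ((∑ i, ∑ j, (L' i j) ^ 2) + (∑ i, ∑ j, (D' i j) ^ 2))
        ≤ ∑ i, ∑ j, (M i j) ^ 2 :=
  low_rank_plus_diag_rewrite_general M L D hL hLr hD hMLD
end

section
/- Let D be a positive definite diagonal p × p matrix and S a symmetric positive semi-definite p × p matrix. Let w_1 ≥ ... ≥ w_p be the eigenvalues of D^{1/2} S D^{1/2} with orthonormal eigenvectors u_1,...,u_p. Fix r ≤ p, set U = (u_1,...,u_r), V = diag(1 − 1/max(w_1,1), ..., 1 − 1/max(w_r,1)), and L* = D^{1/2} U V U^T D^{1/2}. Then L* is symmetric positive semi-definite of rank at most r, D − L* is positive definite, and L* minimizes the objective trace((D−L)S) − log det(D−L) over all symmetric PSD matrices L of rank at most r with D − L positive definite. -/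
open Matrix

section
open scoped ComplexOrder

/-- The positive semidefinite square root of a positive semidefinite matrix, as defined in
Mathlib of December 2024 (`Matrix.PosSemidef.sqrt`, since removed). -/
noncomputable def Matrix.PosSemidef.sqrt {n 𝕜 : Type*} [Fintype n] [DecidableEq n] [RCLike 𝕜]
    {A : Matrix n n 𝕜} (hA : A.PosSemidef) : Matrix n n 𝕜 :=
  hA.1.eigenvectorUnitary.1 * diagonal ((↑) ∘ (Real.sqrt ∘ hA.1.eigenvalues)) *
    (star hA.1.eigenvectorUnitary : Matrix n n 𝕜)

end

/-!
Put `T = D^{1/2} U`, so that `T Tᵀ = D` and `Tᵀ S T = diag w`. The substitution `L = T N Tᵀ`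
preserves positive semidefiniteness and rank, turns `D - L ≻ 0` into `N ≺ 1`, and changes the
objective into `tr((1 - N) diag w) - log det (1 - N) - log det D`. Diagonalising
`N = V diag μ Vᵀ`, the first two terms become `∑ᵢⱼ Vᵢⱼ² (wᵢ (1 - μⱼ) - log (1 - μⱼ))`, weighted by
the doubly stochastic matrix `(Vᵢⱼ²)`. A term with `μⱼ = 0` equals `wᵢ`; any other term is at
least `wᵢ - shrinkGain wᵢ`, where `shrinkGain w = (w - 1 - log w)₊` is what the best factor
`1 / max w 1` gains over the factor `1`. The row weights `∑_{μⱼ ≠ 0} Vᵢⱼ²` lie in `[0, 1]` and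
add up to at most `r`, and `shrinkGain ∘ w` is antitone, so the total gain is at most
`∑_{i<r} shrinkGain wᵢ`. This is attained by `L* = T (1 - diag (shrinkFactor r w)) Tᵀ`.
-/

open Finset

namespace Matrix.PosSemidef

open scoped ComplexOrder

variable {n 𝕜 : Type*} [Fintype n] [DecidableEq n] [RCLike 𝕜] {A : Matrix n n 𝕜}

lemma posSemidef_sqrt (hA : A.PosSemidef) : hA.sqrt.PosSemidef := by
  rw [sqrt, star_eq_conjTranspose]
  refine (PosSemidef.diagonal fun i => ?_).mul_mul_conjTranspose_same _
  simp [Real.sqrt_nonneg]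

lemma sqrt_mul_self (hA : A.PosSemidef) : hA.sqrt * hA.sqrt = A := by
  conv_rhs => rw [hA.1.spectral_theorem, Unitary.conjStarAlgAut_apply]
  have hE := Unitary.coe_star_mul_self hA.1.eigenvectorUnitary
  simp only [sqrt, Matrix.mul_assoc]
  rw [← Matrix.mul_assoc (star _ : Matrix n n 𝕜) _, hE, Matrix.one_mul,
    ← Matrix.mul_assoc (diagonal _), diagonal_mul_diagonal]
  congr 3
  funext i
  simp [← RCLike.ofReal_mul, Real.mul_self_sqrt (hA.eigenvalues_nonneg i)]

lemma transpose_sqrt {B : Matrix n n ℝ} (hB : B.PosSemidef) : hB.sqrtᵀ = hB.sqrt := by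
  simpa [IsHermitian, conjTranspose_eq_transpose_of_trivial] using hB.posSemidef_sqrt.isHermitian

lemma sqrt_mul_mul_transpose {B U : Matrix n n ℝ} (hB : B.PosSemidef) (hU : U * Uᵀ = 1) :
    hB.sqrt * U * (hB.sqrt * U)ᵀ = B := by
  rw [transpose_mul, hB.transpose_sqrt, Matrix.mul_assoc, ← Matrix.mul_assoc U, hU,
    Matrix.one_mul, hB.sqrt_mul_self]

end Matrix.PosSemidef

noncomputable def shrinkGain (w : ℝ) : ℝ := if 1 ≤ w then w - 1 - Real.log w else 0

lemma shrinkGain_nonneg (w : ℝ) : 0 ≤ shrinkGain w := by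
  unfold shrinkGain
  split_ifs with h
  · linarith [Real.log_le_sub_one_of_pos (zero_lt_one.trans_le h)]
  · rfl

lemma shrinkGain_mono : Monotone shrinkGain := by
  intro x y hxy
  unfold shrinkGain
  split_ifs with hx hy hy
  · have hx0 : 0 < x := zero_lt_one.trans_le hx
    have hlog : Real.log y - Real.log x ≤ y / x - 1 := by
      rw [← Real.log_div (by positivity) hx0.ne']
      exact Real.log_le_sub_one_of_pos (by positivity)
    have hdiv : y / x - 1 ≤ y - x := by
      rw [div_sub_one hx0.ne', div_le_iff₀ hx0]
      nlinarith
    linarith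
  · exact absurd (hx.trans hxy) hy
  · linarith [Real.log_le_sub_one_of_pos (zero_lt_one.trans_le hy)]
  · rfl

lemma sub_shrinkGain_le (w : ℝ) {z : ℝ} (hz0 : 0 < z) (hz1 : z ≤ 1) :
    w - shrinkGain w ≤ w * z - Real.log z := by
  unfold shrinkGain
  split_ifs with h
  · have hw0 : 0 < w := zero_lt_one.trans_le h
    have := Real.log_le_sub_one_of_pos (mul_pos hw0 hz0)
    rw [Real.log_mul hw0.ne' hz0.ne'] at this
    linarith
  · nlinarith [Real.log_le_sub_one_of_pos hz0]

lemma mul_one_div_max_sub_log (w : ℝ) :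
    w * (1 / max w 1) - Real.log (1 / max w 1) = w - shrinkGain w := by
  unfold shrinkGain
  split_ifs with h
  · rw [max_eq_left h, one_div, Real.log_inv, mul_inv_cancel₀ (zero_lt_one.trans_le h).ne']
    ring
  · simp [max_eq_right (not_le.mp h).le]

lemma sum_mul_le_sum_of_threshold {ι : Type*} [Fintype ι] (s : Finset ι) {a t : ι → ℝ} {c : ℝ}
    (hc : 0 ≤ c) (hs : ∀ i ∈ s, c ≤ a i) (hsc : ∀ i ∉ s, a i ≤ c)
    (ht0 : ∀ i, 0 ≤ t i) (ht1 : ∀ i, t i ≤ 1) (hts : ∑ i, t i ≤ #s) :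
    ∑ i, t i * a i ≤ ∑ i ∈ s, a i := by
  classical
  have hpt : ∀ i, t i * a i - (if i ∈ s then a i else 0) ≤
      c * (t i - if i ∈ s then 1 else 0) := by
    intro i
    by_cases hi : i ∈ s
    · simp only [hi, if_true]; nlinarith [hs i hi, ht1 i]
    · simp only [hi, if_false, sub_zero]; nlinarith [hsc i hi, ht0 i]
  have hsum := sum_le_sum fun i (_ : i ∈ univ) => hpt i
  simp only [sum_sub_distrib, ← mul_sum, sum_ite_mem, univ_inter, sum_const, nsmul_one] at hsum
  nlinarith

lemma sum_mul_le_sum_lt_of_antitone {p r : ℕ} (hr : r ≤ p) {a t : Fin p → ℝ}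
    (ha0 : ∀ i, 0 ≤ a i) (ha : Antitone a) (ht0 : ∀ i, 0 ≤ t i) (ht1 : ∀ i, t i ≤ 1)
    (hts : ∑ i, t i ≤ r) :
    ∑ i, t i * a i ≤ ∑ i : Fin p with i.val < r, a i := by
  rcases Nat.eq_zero_or_pos p with rfl | hp
  · simp
  have hcard : #{i : Fin p | i.val < r} = r := by rw [Fin.card_filter_val_lt, min_eq_right hr]
  -- for `r = 0` the threshold is `a 0`, since `0 - 1 = 0` in `ℕ`
  refine sum_mul_le_sum_of_threshold _ (c := a ⟨r - 1, by omega⟩) (ha0 _) (fun i hi => ?_)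
    (fun i hi => ?_) ht0 ht1 (by rwa [hcard])
  all_goals
    simp only [mem_filter, mem_univ, true_and] at hi
    exact ha (Fin.mk_le_mk.mpr (by omega))

lemma hadamard_self_mem_doublyStochastic {n : Type*} [Fintype n] [DecidableEq n]
    {V : Matrix n n ℝ} (hV : V ∈ unitaryGroup n ℝ) : V ⊙ V ∈ doublyStochastic ℝ n := by
  have hrow := mem_unitaryGroup_iff.mp hV
  have hcol := mem_unitaryGroup_iff'.mp hV
  rw [star_eq_conjTranspose, conjTranspose_eq_transpose_of_trivial] at hrow hcol
  refine mem_doublyStochastic_iff_sum.mpr ⟨fun i j => mul_self_nonneg _, fun i => ?_, fun j => ?_⟩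
  · simpa [mul_apply, one_apply] using congrFun (congrFun hrow i) i
  · simpa [mul_apply, one_apply] using congrFun (congrFun hcol j) j

lemma sum_sub_shrinkGain_le_of_mem_doublyStochastic {p r : ℕ} (hr : r ≤ p) {w : Fin p → ℝ}
    (hw : Antitone w) {P : Matrix (Fin p) (Fin p) ℝ} (hP : P ∈ doublyStochastic ℝ (Fin p))
    {z : Fin p → ℝ} (hz0 : ∀ j, 0 < z j) (hz1 : ∀ j, z j ≤ 1) (hzr : #{j | z j ≠ 1} ≤ r) :
    ∑ i, w i - ∑ i : Fin p with i.val < r, shrinkGain (w i) ≤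
      ∑ j, (z j * ∑ i, P i j * w i - Real.log (z j)) := by
  set J := ({j | z j ≠ 1} : Finset (Fin p))
  have hP0 : ∀ i j, 0 ≤ P i j := fun i j => nonneg_of_mem_doublyStochastic hP
  have ht1 : ∀ i, ∑ j ∈ J, P i j ≤ 1 := fun i =>
    (sum_le_sum_of_subset_of_nonneg (subset_univ J) fun j _ _ => hP0 i j).trans_eq
      (sum_row_of_mem_doublyStochastic hP i)
  have hts : ∑ i, ∑ j ∈ J, P i j ≤ r := by
    rw [sum_comm (f := fun i j => P i j),
      sum_congr rfl fun j _ => sum_col_of_mem_doublyStochastic hP j, sum_const, nsmul_one]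
    exact_mod_cast hzr
  have hgain := sum_mul_le_sum_lt_of_antitone hr (fun i => shrinkGain_nonneg (w i))
    (shrinkGain_mono.comp_antitone hw) (fun i => sum_nonneg fun j _ => hP0 i j) ht1 hts
  have hpt : ∀ i j, P i j * (w i - if j ∈ J then shrinkGain (w i) else 0) ≤
      P i j * (w i * z j - Real.log (z j)) := by
    intro i j
    refine mul_le_mul_of_nonneg_left ?_ (hP0 i j)
    by_cases hj : j ∈ J
    · rw [if_pos hj]; exact sub_shrinkGain_le _ (hz0 j) (hz1 j)
    · have hzj : z j = 1 := by simpa [J] using hj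
      simp [hj, hzj]
  calc ∑ i, w i - ∑ i : Fin p with i.val < r, shrinkGain (w i)
      ≤ ∑ i, (w i - (∑ j ∈ J, P i j) * shrinkGain (w i)) := by
        rw [sum_sub_distrib]; exact sub_le_sub_left hgain _
    _ = ∑ i, ∑ j, P i j * (w i - if j ∈ J then shrinkGain (w i) else 0) := by
        refine sum_congr rfl fun i _ => ?_
        simp only [mul_sub, sum_sub_distrib, ← sum_mul, sum_row_of_mem_doublyStochastic hP i,
          one_mul, mul_ite, mul_zero, sum_ite_mem, univ_inter]
    _ ≤ ∑ i, ∑ j, P i j * (w i * z j - Real.log (z j)) :=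
        sum_le_sum fun i _ => sum_le_sum fun j _ => hpt i j
    _ = ∑ j, (z j * ∑ i, P i j * w i - Real.log (z j)) := by
        rw [sum_comm]
        refine sum_congr rfl fun j _ => ?_
        simp only [mul_sub, sum_sub_distrib, ← sum_mul, sum_col_of_mem_doublyStochastic hP j,
          one_mul, mul_sum]
        congr 1
        exact sum_congr rfl fun i _ => by ring

section RealMatrix

variable {n : Type*} [Fintype n] [DecidableEq n]

lemma posSemidef_mul_mul_transpose_iff {T X : Matrix n n ℝ} (hT : IsUnit T) :
    (T * X * Tᵀ).PosSemidef ↔ X.PosSemidef := by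
  rw [← conjTranspose_eq_transpose_of_trivial, ← star_eq_conjTranspose,
    hT.posSemidef_star_right_conjugate_iff]

lemma posDef_mul_mul_transpose_iff {T X : Matrix n n ℝ} (hT : IsUnit T) :
    (T * X * Tᵀ).PosDef ↔ X.PosDef := by
  rw [← conjTranspose_eq_transpose_of_trivial, ← star_eq_conjTranspose,
    hT.posDef_star_right_conjugate_iff]

lemma isUnit_of_mul_transpose_eq {T D : Matrix n n ℝ} (hD : IsUnit D) (hTT : T * Tᵀ = D) :
    IsUnit T := by
  have h := (isUnit_iff_isUnit_det _).mp (hTT ▸ hD)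
  rw [det_mul] at h
  exact (isUnit_iff_isUnit_det _).mpr (isUnit_of_mul_isUnit_left h)

lemma transpose_mul_mul_eq_diagonal {Q U S : Matrix n n ℝ} {w : n → ℝ} (hQ : Qᵀ = Q)
    (hU : U * Uᵀ = 1) (heig : Q * S * Q = U * diagonal w * Uᵀ) :
    (Q * U)ᵀ * S * (Q * U) = diagonal w := by
  have hUU : Uᵀ * U = 1 := mul_eq_one_comm.mp hU
  calc (Q * U)ᵀ * S * (Q * U) = Uᵀ * (Q * S * Q) * U := by
        simp only [transpose_mul, hQ, Matrix.mul_assoc]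
    _ = diagonal w := by
        rw [heig, Matrix.mul_assoc, Matrix.mul_assoc, hUU, Matrix.mul_one, ← Matrix.mul_assoc,
          hUU, Matrix.one_mul]

lemma Matrix.IsHermitian.eq_mul_diagonal_mul_transpose {N : Matrix n n ℝ} (hN : N.IsHermitian) :
    N = (hN.eigenvectorUnitary : Matrix n n ℝ) * diagonal hN.eigenvalues *
      (hN.eigenvectorUnitary : Matrix n n ℝ)ᵀ := by
  rw [← conjTranspose_eq_transpose_of_trivial, ← star_eq_conjTranspose]
  simpa [Unitary.conjStarAlgAut_apply] using hN.spectral_theorem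

lemma transpose_mul_diagonal_mul_apply_self (V : Matrix n n ℝ) (w : n → ℝ) (j : n) :
    (Vᵀ * diagonal w * V) j j = ∑ i, (V ⊙ V) i j * w i := by
  rw [mul_apply]
  simp only [mul_diagonal, transpose_apply, hadamard_apply]
  exact sum_congr rfl fun i _ => by ring

end RealMatrix

lemma submatrix_castLE_mul_diagonal_mul_transpose {α : Type*} [CommSemiring α] {p r : ℕ}
    (hr : r ≤ p) (U : Matrix (Fin p) (Fin p) α) (d : Fin p → α) :
    U.submatrix id (Fin.castLE hr) * diagonal (fun i => d (Fin.castLE hr i)) *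
        (U.submatrix id (Fin.castLE hr))ᵀ =
      U * diagonal (fun i => if i.val < r then d i else 0) * Uᵀ := by
  ext a b
  simp only [mul_apply, transpose_apply, submatrix_apply, id_eq, diagonal_apply, mul_ite,
    mul_zero, sum_ite_eq', mem_univ, if_true]
  refine Fintype.sum_of_injective _ (Fin.castLE_injective hr) _ _ (fun i hi => ?_) fun j => ?_
  · have : ¬ i.val < r := fun h => hi ⟨⟨i, h⟩, rfl⟩
    simp [this]
  · simp [j.isLt]

section GaussianNegLogLik

variable {n : Type*} [Fintype n] [DecidableEq n]

noncomputable def gaussianNegLogLik (Θ S : Matrix n n ℝ) : ℝ :=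
  (Θ * S).trace - Real.log Θ.det

lemma gaussianNegLogLik_conj {T X : Matrix n n ℝ} (hT : IsUnit T) (hX : X.det ≠ 0)
    (S : Matrix n n ℝ) :
    gaussianNegLogLik (T * X * Tᵀ) S =
      gaussianNegLogLik X (Tᵀ * S * T) - Real.log (T * Tᵀ).det := by
  have hTdet := ((isUnit_iff_isUnit_det T).mp hT).ne_zero
  have hTT : (T * Tᵀ).det ≠ 0 := by
    rw [det_mul, det_transpose]
    exact mul_ne_zero hTdet hTdet
  have hdet : (T * X * Tᵀ).det = (T * Tᵀ).det * X.det := by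
    simp only [det_mul]; ring
  have htr : (T * X * Tᵀ * S).trace = (X * (Tᵀ * S * T)).trace := by
    rw [Matrix.mul_assoc, Matrix.mul_assoc, trace_mul_comm, Matrix.mul_assoc, Matrix.mul_assoc]
  simp only [gaussianNegLogLik, htr, hdet, Real.log_mul hTT hX]
  ring

lemma gaussianNegLogLik_diagonal {z : n → ℝ} (hz : ∀ j, z j ≠ 0) (S : Matrix n n ℝ) :
    gaussianNegLogLik (diagonal z) S = ∑ j, (z j * S j j - Real.log (z j)) := by
  rw [gaussianNegLogLik, det_diagonal, Real.log_prod fun j _ => hz j, sum_sub_distrib]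
  simp [trace, diagonal_mul]

end GaussianNegLogLik

lemma le_gaussianNegLogLik_one_sub {p r : ℕ} (hr : r ≤ p) {w : Fin p → ℝ} (hw : Antitone w)
    {N : Matrix (Fin p) (Fin p) ℝ} (hN : N.PosSemidef) (hNr : N.rank ≤ r)
    (h1N : (1 - N).PosDef) :
    ∑ i, w i - ∑ i : Fin p with i.val < r, shrinkGain (w i) ≤
      gaussianNegLogLik (1 - N) (diagonal w) := by
  set E := hN.1.eigenvectorUnitary
  set μ := hN.1.eigenvalues
  set V : Matrix (Fin p) (Fin p) ℝ := E.1
  have hVV : V * Vᵀ = 1 := by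
    simpa [star_eq_conjTranspose, conjTranspose_eq_transpose_of_trivial] using
      mem_unitaryGroup_iff.mp E.2
  have hV : IsUnit V := Unitary.isUnit_coe
  have hspec : 1 - N = V * diagonal (fun j => 1 - μ j) * Vᵀ := by
    have : diagonal (fun j => 1 - μ j) = 1 - diagonal μ := by rw [← diagonal_one, diagonal_sub]
    rw [this, Matrix.mul_sub, Matrix.sub_mul, Matrix.mul_one, hVV,
      ← hN.1.eq_mul_diagonal_mul_transpose]
  have hz0 : ∀ j, 0 < 1 - μ j := by
    rwa [hspec, posDef_mul_mul_transpose_iff hV, posDef_diagonal_iff] at h1N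
  have hzr : #{j | 1 - μ j ≠ 1} ≤ r := by
    simp only [ne_eq, sub_eq_self]
    rwa [← Fintype.card_subtype, ← hN.1.rank_eq_card_non_zero_eigs]
  rw [hspec, gaussianNegLogLik_conj hV (det_diagonal (d := fun j => 1 - μ j) ▸
      prod_ne_zero_iff.mpr fun j _ => (hz0 j).ne'), hVV, det_one, Real.log_one, sub_zero,
    gaussianNegLogLik_diagonal fun j => (hz0 j).ne']
  simp only [transpose_mul_diagonal_mul_apply_self]
  exact sum_sub_shrinkGain_le_of_mem_doublyStochastic hr hw
    (hadamard_self_mem_doublyStochastic E.2) hz0 (fun j => by linarith [hN.eigenvalues_nonneg j])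
    hzr

noncomputable def shrinkFactor {p : ℕ} (r : ℕ) (w : Fin p → ℝ) (i : Fin p) : ℝ :=
  if i.val < r then 1 / max (w i) 1 else 1

lemma posDef_diagonal_shrinkFactor {p : ℕ} (r : ℕ) (w : Fin p → ℝ) :
    (diagonal (shrinkFactor r w)).PosDef :=
  posDef_diagonal_iff.mpr fun i => by unfold shrinkFactor; split_ifs <;> positivity

lemma one_sub_diagonal_shrinkFactor {p : ℕ} (r : ℕ) (w : Fin p → ℝ) :
    1 - diagonal (shrinkFactor r w) =
      diagonal fun i => if i.val < r then 1 - 1 / max (w i) 1 else 0 := by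
  rw [← diagonal_one, diagonal_sub]
  congr 1
  funext i
  unfold shrinkFactor
  split_ifs <;> ring

lemma posSemidef_one_sub_diagonal_shrinkFactor {p : ℕ} (r : ℕ) (w : Fin p → ℝ) :
    (1 - diagonal (shrinkFactor r w)).PosSemidef := by
  rw [one_sub_diagonal_shrinkFactor, posSemidef_diagonal_iff]
  intro i
  split_ifs
  · exact sub_nonneg.mpr ((div_le_one (by positivity)).mpr (le_max_right _ _))
  · simp

lemma gaussianNegLogLik_diagonal_shrinkFactor {p : ℕ} (r : ℕ) (w : Fin p → ℝ) :
    gaussianNegLogLik (diagonal (shrinkFactor r w)) (diagonal w) =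
      ∑ i, w i - ∑ i : Fin p with i.val < r, shrinkGain (w i) := by
  rw [gaussianNegLogLik_diagonal fun i => (posDef_diagonal_iff.mp
      (posDef_diagonal_shrinkFactor r w) i).ne', sum_filter, ← sum_sub_distrib]
  refine sum_congr rfl fun i _ => ?_
  unfold shrinkFactor
  split_ifs
  · rw [diagonal_apply_eq, mul_comm, mul_one_div_max_sub_log]
  · simp

section Whitening

variable {p : ℕ} {D S T : Matrix (Fin p) (Fin p) ℝ} {w : Fin p → ℝ}

lemma sub_mul_mul_transpose (hTT : T * Tᵀ = D) (N : Matrix (Fin p) (Fin p) ℝ) :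
    D - T * N * Tᵀ = T * (1 - N) * Tᵀ := by
  rw [Matrix.mul_sub, Matrix.sub_mul, Matrix.mul_one, hTT]

lemma gaussianNegLogLik_sub_mul_mul_transpose (hT : IsUnit T) (hTT : T * Tᵀ = D)
    (hTST : Tᵀ * S * T = diagonal w) {N : Matrix (Fin p) (Fin p) ℝ} (h1N : (1 - N).PosDef) :
    gaussianNegLogLik (D - T * N * Tᵀ) S =
      gaussianNegLogLik (1 - N) (diagonal w) - Real.log D.det := by
  rw [sub_mul_mul_transpose hTT, gaussianNegLogLik_conj hT h1N.det_pos.ne', hTST, hTT]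

lemma gaussianNegLogLik_shrink_le {r : ℕ} (hr : r ≤ p) (hw : Antitone w) (hT : IsUnit T)
    (hTT : T * Tᵀ = D) (hTST : Tᵀ * S * T = diagonal w) {L : Matrix (Fin p) (Fin p) ℝ}
    (hL : L.PosSemidef) (hLr : L.rank ≤ r) (hDL : (D - L).PosDef) :
    gaussianNegLogLik (D - T * (1 - diagonal (shrinkFactor r w)) * Tᵀ) S ≤
      gaussianNegLogLik (D - L) S := by
  set N := T⁻¹ * L * (T⁻¹)ᵀ
  have hLN : L = T * N * Tᵀ := by
    have hTinv : T * T⁻¹ = 1 := mul_nonsing_inv T ((isUnit_iff_isUnit_det _).mp hT)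
    calc L = T * T⁻¹ * L * (T * T⁻¹)ᵀ := by
          rw [hTinv, transpose_one, Matrix.one_mul, Matrix.mul_one]
      _ = T * N * Tᵀ := by simp only [N, transpose_mul, Matrix.mul_assoc]
  have hNr : N.rank ≤ r := ((rank_mul_le_left _ _).trans (rank_mul_le_right _ _)).trans hLr
  rw [hLN, posSemidef_mul_mul_transpose_iff hT] at hL
  rw [hLN, sub_mul_mul_transpose hTT, posDef_mul_mul_transpose_iff hT] at hDL
  have hstar : (1 - (1 - diagonal (shrinkFactor r w))).PosDef := by
    rw [sub_sub_cancel]; exact posDef_diagonal_shrinkFactor r w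
  rw [hLN, gaussianNegLogLik_sub_mul_mul_transpose hT hTT hTST hstar,
    gaussianNegLogLik_sub_mul_mul_transpose hT hTT hTST hDL, sub_sub_cancel,
    gaussianNegLogLik_diagonal_shrinkFactor]
  exact sub_le_sub_right (le_gaussianNegLogLik_one_sub hr hw hL hNr hDL) _

end Whitening

theorem fixed_D_optimal_L_general {p r : ℕ} (hr : r ≤ p)
    (D S : Matrix (Fin p) (Fin p) ℝ) (hDpd : D.PosDef)
    (U : Matrix (Fin p) (Fin p) ℝ) (w : Fin p → ℝ) (hw : Antitone w)
    (hU : U * Uᵀ = 1)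
    (heig : hDpd.posSemidef.sqrt * S * hDpd.posSemidef.sqrt
      = U * Matrix.diagonal w * Uᵀ)
    (Lstar : Matrix (Fin p) (Fin p) ℝ)
    (hLstar : Lstar =
      hDpd.posSemidef.sqrt * (U.submatrix id (Fin.castLE hr)) *
        Matrix.diagonal (fun i : Fin r => 1 - 1 / max (w (Fin.castLE hr i)) 1) *
        (U.submatrix id (Fin.castLE hr))ᵀ * hDpd.posSemidef.sqrt) :
    Lstar.PosSemidef ∧ Lstar.rank ≤ r ∧ (D - Lstar).PosDef ∧
    ∀ L : Matrix (Fin p) (Fin p) ℝ, L.PosSemidef → L.rank ≤ r → (D - L).PosDef →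
      ((D - Lstar) * S).trace - Real.log (D - Lstar).det ≤
        ((D - L) * S).trace - Real.log (D - L).det := by
  set Q := hDpd.posSemidef.sqrt
  set T := Q * U
  have hQ : Qᵀ = Q := hDpd.posSemidef.transpose_sqrt
  have hTT : T * Tᵀ = D := hDpd.posSemidef.sqrt_mul_mul_transpose hU
  have hTST : Tᵀ * S * T = diagonal w := transpose_mul_mul_eq_diagonal hQ hU heig
  have hT : IsUnit T := isUnit_of_mul_transpose_eq hDpd.isUnit hTT
  have hTQ : ∀ X, T * X * Tᵀ = Q * (U * X * Uᵀ) * Q := fun X => by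
    simp only [T, transpose_mul, hQ, Matrix.mul_assoc]
  have hLstarT : Lstar = T * (1 - diagonal (shrinkFactor r w)) * Tᵀ := by
    rw [hLstar, one_sub_diagonal_shrinkFactor, hTQ,
      ← submatrix_castLE_mul_diagonal_mul_transpose hr U]
    simp only [Matrix.mul_assoc]
  refine ⟨?_, ?_, ?_, fun L hL hLr hDL => ?_⟩
  · rw [hLstarT, posSemidef_mul_mul_transpose_iff hT]
    exact posSemidef_one_sub_diagonal_shrinkFactor r w
  · rw [hLstar]
    exact (rank_mul_le_left _ _).trans <| (rank_mul_le_left _ _).trans <|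
      (rank_le_card_width _).trans_eq (Fintype.card_fin r)
  · rw [hLstarT, sub_mul_mul_transpose hTT, sub_sub_cancel, posDef_mul_mul_transpose_iff hT]
    exact posDef_diagonal_shrinkFactor r w
  · rw [hLstarT]
    exact gaussianNegLogLik_shrink_le hr hw hT hTT hTST hL hLr hDL

/-- Lemma 4: with D positive definite diagonal and S PSD, letting
D^{1/2} S D^{1/2} = U diag(w) Uᵀ (w descending, U orthogonal), the matrix
L* = D^{1/2} U_r V U_rᵀ D^{1/2}, with V = diag(1 − 1/max(wᵢ,1)), is symmetric
PSD of rank at most r, satisfies D − L* ≻ 0, and minimizes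
trace((D−L)S) − log det(D−L) over all PSD matrices L of rank ≤ r with D − L ≻ 0. -/
theorem fixed_D_optimal_L {p r : ℕ} (hr : r ≤ p)
    (D S : Matrix (Fin p) (Fin p) ℝ) (hD : D.IsDiag) (hDpd : D.PosDef)
    (hS : S.PosSemidef)
    (U : Matrix (Fin p) (Fin p) ℝ) (w : Fin p → ℝ) (hw : Antitone w)
    (hU : U * Uᵀ = 1)
    (heig : hDpd.posSemidef.sqrt * S * hDpd.posSemidef.sqrt
      = U * Matrix.diagonal w * Uᵀ)
    (Lstar : Matrix (Fin p) (Fin p) ℝ)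
    (hLstar : Lstar =
      hDpd.posSemidef.sqrt * (U.submatrix id (Fin.castLE hr)) *
        Matrix.diagonal (fun i : Fin r => 1 - 1 / max (w (Fin.castLE hr i)) 1) *
        (U.submatrix id (Fin.castLE hr))ᵀ * hDpd.posSemidef.sqrt) :
    Lstar.PosSemidef ∧ Lstar.rank ≤ r ∧ (D - Lstar).PosDef ∧
    ∀ L : Matrix (Fin p) (Fin p) ℝ, L.PosSemidef → L.rank ≤ r → (D - L).PosDef →
      ((D - Lstar) * S).trace - Real.log (D - Lstar).det ≤
        ((D - L) * S).trace - Real.log (D - L).det :=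
  fixed_D_optimal_L_general hr D S hDpd U w hw hU heig Lstar hLstar
end
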